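/- Let E be a finite nonempty linearly ordered set, I an irreflexive symmetric relation on E, and X^• a finite pointed M(E,I)-set with |X| = n+1, such that the action is full and satisfies the rooted-tree condition. Then for every s ≥ 1 there is an isomorphism of abelian groups H_s(B(X^•)) ≅ (H_s(K(E,I)))^{n+1}. (In the paper's language: lim_s ℤ[x_0,…,x_n] ≅ (lim_s ℤ[x_0])^{n+1}.) -/

import Mathlib

/-!
Common setup: free partially commutative monoid `M(E,I)` data, cliques of the
commutation relation, the augmented clique chain complex `K(E,I)`, the chain
complexes `A(X^•)` and `B(X^•)` of a pointed `M(E,I)`-set, and their homology.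

A pointed `M(E,I)`-set with underlying non-base part `X` is modelled as an
action `act : Option X → E → Option X`, where `none` is the base point `*`.
-/

namespace PCMHomology

variable {E : Type*} [LinearOrder E] [Fintype E]

/-- `S` is a clique for the relation `I`: distinct elements pairwise satisfy `I`. -/
def IsClique (I : E → E → Prop) (S : Finset E) : Prop :=
  ∀ a ∈ S, ∀ b ∈ S, a ≠ b → I a b

/-- The type of `s`-cliques: `s`-element subsets of `E` whose elements pairwise
commute (satisfy `I`). -/
def Clique (I : E → E → Prop) (s : ℕ) : Type _ :=
  {S : Finset E // S.card = s ∧ IsClique I S}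

/-- `p_s`, the number of `s`-cliques. -/
noncomputable def pClique (I : E → E → Prop) (s : ℕ) : ℕ :=
  Nat.card (Clique I s)

/-- Removing an element of an `(s+1)`-clique yields an `s`-clique. -/
def faceClique {I : E → E → Prop} {s : ℕ} (S : Clique I (s + 1))
    (e : {a // a ∈ S.val}) : Clique I s :=
  ⟨S.val.erase e.val, by
    refine ⟨?_, ?_⟩
    · rw [Finset.card_erase_of_mem e.property, S.property.1]; rfl
    · intro a ha b hb hab
      exact S.property.2 a (Finset.mem_of_mem_erase ha) b
        (Finset.mem_of_mem_erase hb) hab⟩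

/-- If `e` is the `k`-th element of the clique `S = {e_1 < ⋯ < e_{s+1}}` then
`posIdx S e = k - 1`, the number of elements of `S` smaller than `e`. -/
def posIdx {I : E → E → Prop} {s : ℕ} (S : Clique I (s + 1))
    (e : {a // a ∈ S.val}) : ℕ :=
  (S.val.filter (fun a => a < e.val)).card

/-- Degree-`s` component of the augmented clique chain complex `K(E,I)`:
the free abelian group on the `s`-cliques. -/
abbrev KC (I : E → E → Prop) (s : ℕ) : Type _ := Clique I s →₀ ℤ

/-- The differential of `K(E,I)`:
`d (e_1,…,e_{s+1}) = ∑ (-1)^(k+1) (e_1,…,ê_k,…,e_{s+1})`. -/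
noncomputable def Kd (I : E → E → Prop) (s : ℕ) : KC I (s + 1) →+ KC I s :=
  Finsupp.liftAddHom fun S => zmultiplesHom _
    (∑ e ∈ S.val.attach,
      ((-1 : ℤ) ^ posIdx S e) • Finsupp.single (faceClique S e) (1 : ℤ))

/-- Degree-`s` component of the chain complex `A(X^•)`: the free abelian group
on pairs `(x, S)` with `x ∈ X^•` (including the base point `* = none`) and `S`
an `s`-clique. -/
abbrev AC (I : E → E → Prop) (X : Type*) (s : ℕ) : Type _ :=
  (Option X × Clique I s) →₀ ℤ

/-- The differential of `A(X^•)`: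
`d (x; e_1,…,e_{s+1}) = ∑ (-1)^k ((x·e_k; …ê_k…) - (x; …ê_k…))`. -/
noncomputable def Ad (I : E → E → Prop) {X : Type*}
    (act : Option X → E → Option X) (s : ℕ) : AC I X (s + 1) →+ AC I X s :=
  Finsupp.liftAddHom fun p => zmultiplesHom _
    (∑ e ∈ p.2.val.attach, ((-1 : ℤ) ^ (posIdx p.2 e + 1)) •
      (Finsupp.single (act p.1 e.val, faceClique p.2 e) (1 : ℤ)
        - Finsupp.single (p.1, faceClique p.2 e) (1 : ℤ)))

/-- Degree-`s` component of the chain complex `B(X^•)`: the free abelian group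
on pairs `(x, S)` with `x ∈ X` (so `x ≠ *`) and `S` an `s`-clique. -/
abbrev BC (I : E → E → Prop) (X : Type*) (s : ℕ) : Type _ :=
  (X × Clique I s) →₀ ℤ

/-- The generator `(x·e; T)` of `B(X^•)`, interpreted as `0` when `x·e = *`. -/
noncomputable def bGen {I : E → E → Prop} {X : Type*} {s : ℕ} (o : Option X) (T : Clique I s) :
    BC I X s :=
  o.elim 0 (fun y => Finsupp.single (y, T) (1 : ℤ))

/-- The differential of `B(X^•)`:
`d (x; e_1,…,e_{s+1}) = ∑ (-1)^k ((x·e_k; …ê_k…) - (x; …ê_k…))`, with a term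
`(x·e_k; T)` interpreted as `0` when `x·e_k = *`. -/
noncomputable def Bd (I : E → E → Prop) {X : Type*}
    (act : Option X → E → Option X) (s : ℕ) : BC I X (s + 1) →+ BC I X s :=
  Finsupp.liftAddHom fun p => zmultiplesHom _
    (∑ e ∈ p.2.val.attach, ((-1 : ℤ) ^ (posIdx p.2 e + 1)) •
      (bGen (act (some p.1) e.val) (faceClique p.2 e)
        - Finsupp.single (p.1, faceClique p.2 e) (1 : ℤ)))

/-- Homology at `C1` of `C2 -d2→ C1 -d1→ C0`: the kernel of `d1` modulo (its
intersection with) the image of `d2`. -/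
abbrev homologyOf {C2 C1 C0 : Type*} [AddCommGroup C2] [AddCommGroup C1]
    [AddCommGroup C0] (d1 : C1 →+ C0) (d2 : C2 →+ C1) : Type _ :=
  d1.ker ⧸ ((d2.range).addSubgroupOf d1.ker)

/-- The homology groups of a nonnegatively graded chain complex `(C, d)`;
in degree `0` this is `C 0 / im (d 0)`. -/
def Hmlgy (C : ℕ → Type*) [∀ n, AddCommGroup (C n)]
    (d : ∀ n, C (n + 1) →+ C n) : ℕ → Type _
  | 0 => homologyOf (0 : C 0 →+ PUnit.{1}) (d 0)
  | (s + 1) => homologyOf (d s) (d (s + 1))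

instance hmlgyAddCommGroup (C : ℕ → Type*) [∀ n, AddCommGroup (C n)]
    (d : ∀ n, C (n + 1) →+ C n) : ∀ s, AddCommGroup (Hmlgy C d s)
  | 0 => inferInstanceAs (AddCommGroup (homologyOf (0 : C 0 →+ PUnit.{1}) (d 0)))
  | (s + 1) => inferInstanceAs (AddCommGroup (homologyOf (d s) (d (s + 1))))

end PCMHomology


/-!
For a full action `x·e = f x` does not depend on `e`, so `B(X^•)` is `ℤ[X] ⊗ K(E,I)` with
differential `(1 - T) ⊗ d`, where `T (x; S) = (f x; S)` (read as `0` when `f x = *`). The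
rooted-tree condition makes `T` nilpotent, so `1 - T` is an automorphism commuting with `1 ⊗ d`,
and twisting by it does not change homology. What is left is `ℤ[X] ⊗ K(E,I)` with differential
`1 ⊗ d`, that is `|X| = n + 1` copies of `K(E,I)`.
-/

namespace PCMHomology

noncomputable def addEquivOfIsUnit {M : Type*} [AddCommGroup M] {u : AddMonoid.End M}
    (hu : IsUnit u) : M ≃+ M where
  toFun := u
  invFun := ↑hu.unit⁻¹
  left_inv := DFunLike.congr_fun hu.unit.inv_mul
  right_inv := DFunLike.congr_fun hu.unit.mul_inv
  map_add' := map_add u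

section Homology

variable {C2 C1 C0 D2 D1 D0 Q : Type*} [AddCommGroup C2] [AddCommGroup C1] [AddCommGroup C0]
  [AddCommGroup D2] [AddCommGroup D1] [AddCommGroup D0] [AddCommGroup Q]

noncomputable def homologyOfEquivOfSurjective {d1 : C1 →+ C0} {d2 : C2 →+ C1}
    (φ : d1.ker →+ Q) (hφ : Function.Surjective φ)
    (hker : φ.ker = d2.range.addSubgroupOf d1.ker) :
    homologyOf d1 d2 ≃+ Q :=
  (QuotientAddGroup.quotientAddEquivOfEq hker.symm).trans
    (QuotientAddGroup.quotientKerEquivOfSurjective φ hφ)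

noncomputable def homologyOfCongr {d1 : C1 →+ C0} {d2 : C2 →+ C1}
    {d1' : D1 →+ D0} {d2' : D2 →+ D1} (e2 : C2 ≃+ D2) (e1 : C1 ≃+ D1) (e0 : C0 ≃+ D0)
    (h1 : ∀ x, d1' (e1 x) = e0 (d1 x)) (h2 : ∀ x, d2' (e2 x) = e1 (d2 x)) :
    homologyOf d1 d2 ≃+ homologyOf d1' d2' := by
  have mem_ker_iff : ∀ x, e1 x ∈ d1'.ker ↔ x ∈ d1.ker := fun x => by
    simp only [AddMonoidHom.mem_ker, h1, AddEquiv.map_eq_zero_iff]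
  let κ : d1.ker →+ d1'.ker :=
    AddMonoidHom.mk' (fun x => ⟨e1 x, (mem_ker_iff x).2 x.2⟩) fun a b => by ext; simp
  refine homologyOfEquivOfSurjective ((QuotientAddGroup.mk' _).comp κ) ?_ ?_
  · intro q
    obtain ⟨⟨y, hy⟩, rfl⟩ := QuotientAddGroup.mk'_surjective _ q
    refine ⟨⟨e1.symm y, (mem_ker_iff _).1 (by simpa using hy)⟩, ?_⟩
    rw [AddMonoidHom.comp_apply]
    exact congrArg _ (Subtype.ext (e1.apply_symm_apply y))
  · ext x
    simp only [AddMonoidHom.mem_ker, AddMonoidHom.coe_comp, Function.comp_apply,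
      QuotientAddGroup.mk'_apply, QuotientAddGroup.eq_zero_iff, AddSubgroup.mem_addSubgroupOf,
      AddMonoidHom.mem_range, e2.surjective.exists, h2, κ]
    simp

noncomputable def homologyOfPi (ι : Type*) (d1 : C1 →+ C0) (d2 : C2 →+ C1) :
    homologyOf (d1.compLeft ι) (d2.compLeft ι) ≃+ (ι → homologyOf d1 d2) := by
  have mem_ker : ∀ (v : (d1.compLeft ι).ker) i, (v : ι → C1) i ∈ d1.ker := fun v i =>
    congrFun v.2 i
  refine homologyOfEquivOfSurjective
    (AddMonoidHom.pi fun i => (QuotientAddGroup.mk' _).comp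
      (AddMonoidHom.mk' (fun v => ⟨(v : ι → C1) i, mem_ker v i⟩) fun _ _ => rfl)) ?_ ?_
  · intro q
    choose y hy using fun i => QuotientAddGroup.mk'_surjective _ (q i)
    exact ⟨⟨fun i => y i, funext fun i => (y i).2⟩, funext hy⟩
  · ext v
    simp only [AddMonoidHom.mem_ker, AddSubgroup.mem_addSubgroupOf, AddMonoidHom.mem_range,
      funext_iff, AddMonoidHom.pi_apply, AddMonoidHom.comp_apply, QuotientAddGroup.mk'_apply,
      QuotientAddGroup.eq_zero_iff, Pi.zero_apply]
    exact Classical.skolem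

/-- The chain isomorphism is `u1` in the middle degree and `u0 ∘ u0` below it, because
`(u0 ∘ D1) ∘ u1 = u0 ∘ u0 ∘ D1`. -/
noncomputable def homologyOfTwist {u0 : AddMonoid.End C0} {u1 : AddMonoid.End C1}
    (hu0 : IsUnit u0) (hu1 : IsUnit u1) {D1 : C1 →+ C0} (D2 : C2 →+ C1)
    (hcomm : ∀ x, D1 (u1 x) = u0 (D1 x)) :
    homologyOf D1 D2 ≃+ homologyOf (AddMonoidHom.comp u0 D1) (AddMonoidHom.comp u1 D2) :=
  homologyOfCongr (.refl C2) (addEquivOfIsUnit hu1)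
    ((addEquivOfIsUnit hu0).trans (addEquivOfIsUnit hu0))
    (fun x => congrArg u0 (hcomm x)) fun _ => rfl

end Homology

section Shift

variable {E : Type*} (I : E → E → Prop) {X : Type*}

noncomputable def shift (f : Option X → Option X) (s : ℕ) : AddMonoid.End (BC I X s) :=
  Finsupp.liftAddHom fun p => zmultiplesHom _ (bGen (f (some p.1)) p.2)

variable {I} {f : Option X → Option X} {s : ℕ}

theorem single_eq_zsmul_bGen (x : X) (S : Clique I s) (c : ℤ) :
    Finsupp.single (x, S) c = c • bGen (some x) S := by
  simp [bGen, Finsupp.smul_single]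

theorem shift_single (x : X) (S : Clique I s) (c : ℤ) :
    shift I f s (Finsupp.single (x, S) c) = c • bGen (f (some x)) S :=
  Finsupp.liftAddHom_apply_single _ _ _

theorem one_sub_shift_apply (v : BC I X s) : (1 - shift I f s) v = v - shift I f s v := rfl

theorem shift_bGen (hf : f none = none) (o : Option X) (T : Clique I s) :
    shift I f s (bGen o T) = bGen (f o) T := by
  cases o with
  | none => simp [bGen, hf]
  | some x => exact (shift_single x T 1).trans (one_smul _ _)

theorem shift_pow_bGen (hf : f none = none) (m : ℕ) (o : Option X) (T : Clique I s) :
    (shift I f s ^ m) (bGen o T) = bGen (f^[m] o) T := by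
  induction m generalizing o with
  | zero => rfl
  | succ m ih =>
    rw [pow_succ, AddMonoid.End.coe_mul, Function.comp_apply, shift_bGen hf, ih,
      Function.iterate_succ_apply]

theorem isNilpotent_shift [Finite X] (hf : f none = none)
    (hroot : ∀ x : X, ∃ k, f^[k] (some x) = none) : IsNilpotent (shift I f s) := by
  choose k hk using hroot
  obtain ⟨N, hN⟩ := (Set.finite_range k).bddAbove
  have hkill : ∀ x, f^[N] (some x) = none := fun x => by
    rw [← Nat.sub_add_cancel (hN (Set.mem_range_self x)), Function.iterate_add_apply, hk x,
      Function.iterate_fixed hf]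
  refine ⟨N, Finsupp.addHom_ext fun ⟨x, S⟩ c => ?_⟩
  change (shift I f s ^ N) (Finsupp.single (x, S) c) = 0
  rw [single_eq_zsmul_bGen, map_zsmul, shift_pow_bGen hf, hkill]
  simp [bGen]

end Shift

section SliceComplex

variable {E : Type*} [LinearOrder E] (I : E → E → Prop) {X : Type*}

/-- The differential of `K(E,I)` applied in each slice `{x} × K(E,I)` of `B(X^•)`. -/
noncomputable def sliceKd (s : ℕ) : BC I X (s + 1) →+ BC I X s :=
  (Finsupp.curryAddEquiv.symm.toAddMonoidHom.comp (Finsupp.mapRange.addMonoidHom (Kd I s))).comp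
    Finsupp.curryAddEquiv.toAddMonoidHom

variable {I} {s : ℕ}

theorem sliceKd_single (x : X) (S : Clique I (s + 1)) (c : ℤ) :
    sliceKd I s (Finsupp.single (x, S) c) =
      c • ∑ e ∈ S.val.attach, (-1 : ℤ) ^ posIdx S e • Finsupp.single (x, faceClique S e) 1 := by
  simp only [sliceKd, Kd, AddMonoidHom.comp_apply, AddEquiv.coe_toAddMonoidHom,
    Finsupp.coe_curryAddEquiv, Finsupp.curry_single, Finsupp.mapRange.addMonoidHom_apply,
    Finsupp.mapRange_single, Finsupp.liftAddHom_apply_single, zmultiplesHom_apply,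
    ← Finsupp.smul_single, Finsupp.single_finsetSum, map_zsmul, map_sum,
    Finsupp.curryAddEquiv_symm_apply, Finsupp.uncurry_single]

theorem sliceKd_bGen (o : Option X) (S : Clique I (s + 1)) :
    sliceKd I s (bGen o S) = ∑ e ∈ S.val.attach, (-1 : ℤ) ^ posIdx S e • bGen o (faceClique S e) := by
  cases o with
  | none => simp [bGen]
  | some x => simpa [bGen] using sliceKd_single x S 1

theorem sliceKd_shift (f : Option X → Option X) (v : BC I X (s + 1)) :
    sliceKd I s (shift I f (s + 1) v) = shift I f s (sliceKd I s v) := by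
  induction v using Finsupp.induction_linear with
  | zero => simp
  | add v w hv hw => simp only [map_add, hv, hw]
  | single p c =>
    obtain ⟨x, S⟩ := p
    simp only [shift_single, sliceKd_single, map_zsmul, map_sum, sliceKd_bGen, one_smul]

theorem sliceKd_one_sub_shift (f : Option X → Option X) (v : BC I X (s + 1)) :
    sliceKd I s ((1 - shift I f (s + 1)) v) = (1 - shift I f s) (sliceKd I s v) := by
  rw [one_sub_shift_apply, one_sub_shift_apply, map_sub, sliceKd_shift]

theorem Bd_eq_one_sub_shift_comp_sliceKd {act : Option X → E → Option X}
    {f : Option X → Option X} (hf : ∀ o e, act o e = f o) (s : ℕ) :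
    Bd I act s = AddMonoidHom.comp (1 - shift I f s) (sliceKd I s) := by
  refine Finsupp.addHom_ext fun ⟨x, S⟩ c => ?_
  change _ = (1 - shift I f s) (sliceKd I s (Finsupp.single (x, S) c))
  simp only [Bd, Finsupp.liftAddHom_apply_single, zmultiplesHom_apply, sliceKd_single, map_zsmul,
    map_sum, hf]
  congr 1
  refine Finset.sum_congr rfl fun e _ => ?_
  rw [one_sub_shift_apply, shift_single, one_smul,
    pow_succ, mul_neg_one, neg_smul, ← smul_neg, neg_sub]

noncomputable def sliceEquiv [Finite X] (s : ℕ) : BC I X s ≃+ (X → KC I s) :=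
  Finsupp.curryAddEquiv.trans Finsupp.addEquivFunOnFinite

theorem compLeft_Kd_sliceEquiv [Finite X] (v : BC I X (s + 1)) :
    (Kd I s).compLeft X (sliceEquiv (s + 1) v) = sliceEquiv s (sliceKd I s v) := by
  funext x
  change Kd I s (v.curry x) = (v.curry.mapRange (Kd I s) (map_zero _)).uncurry.curry x
  rw [Finsupp.curry_uncurry, Finsupp.mapRange_apply]

end SliceComplex

theorem stmt7_general {E : Type*} [LinearOrder E]
    (I : E → E → Prop)
    (X : Type*) [Fintype X] (n : ℕ) (hcard : Fintype.card X = n + 1)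
    (act : Option X → E → Option X)
    (hstar : ∀ e, act none e = none)
    (hfull : ∀ o e e', act o e = act o e')
    (e0 : E)
    (htree : ∀ x : X, ∃ k : ℕ, (fun o => act o e0)^[k] (some x) = none) :
    ∀ s : ℕ, 1 ≤ s → Nonempty
      (Hmlgy (BC I X) (Bd I act) s ≃+
        (Fin (n + 1) → Hmlgy (KC I) (Kd I) s)) := by
  intro s hs
  obtain ⟨t, rfl⟩ : ∃ t, s = t + 1 := ⟨s - 1, by omega⟩
  let f : Option X → Option X := fun o => act o e0
  have hf : ∀ o e, act o e = f o := fun o e => hfull o e e0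
  have hunit : ∀ s, IsUnit (1 - shift I f s) := fun s =>
    (isNilpotent_shift (hstar e0) htree).isUnit_one_sub
  change Nonempty (homologyOf (Bd I act t) (Bd I act (t + 1)) ≃+ _)
  rw [Bd_eq_one_sub_shift_comp_sliceKd hf, Bd_eq_one_sub_shift_comp_sliceKd hf]
  exact ⟨(homologyOfTwist (hunit t) (hunit (t + 1)) _ (sliceKd_one_sub_shift f)).symm.trans <|
    (homologyOfCongr (sliceEquiv (t + 2)) (sliceEquiv (t + 1)) (sliceEquiv t)
      compLeft_Kd_sliceEquiv compLeft_Kd_sliceEquiv).trans <|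
    (homologyOfPi X _ _).trans (AddEquiv.arrowCongr (Fintype.equivFinOfCardEq hcard) (.refl _))⟩

/-- Let `X^•` be a finite pointed `M(E,I)`-set with
`|X| = n + 1`, with full action satisfying the rooted-tree condition. Then for
every `s ≥ 1`, `H_s(B(X^•)) ≅ (H_s(K(E,I)))^{n+1}`. -/
theorem stmt7 {E : Type*} [LinearOrder E] [Fintype E] [Nonempty E]
    (I : E → E → Prop) (hirr : ∀ e, ¬ I e e) (hsym : ∀ e e', I e e' → I e' e)
    (X : Type*) [Fintype X] (n : ℕ) (hcard : Fintype.card X = n + 1)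
    (act : Option X → E → Option X)
    (hstar : ∀ e, act none e = none)
    (hcomm : ∀ o e e', I e e' → act (act o e) e' = act (act o e') e)
    (hfull : ∀ o e e', act o e = act o e')
    (e0 : E)
    (htree : ∀ x : X, ∃ k : ℕ, (fun o => act o e0)^[k] (some x) = none) :
    ∀ s : ℕ, 1 ≤ s → Nonempty
      (Hmlgy (BC I X) (Bd I act) s ≃+
        (Fin (n + 1) → Hmlgy (KC I) (Kd I) s)) :=
  stmt7_general I X n hcard act hstar hfull e0 htree

end PCMHomology
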